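/- arXiv:2604.27288 — 2 statements merged into one kernel-verified Lean document; each statement's English description precedes it below -/
import Mathlib

section
/- In the free product (Z/mZ) * (Z/nZ) * (Z/kZ) with m, n, k ≥ 2 and generators a, b, c, the subgroup generated by ab and ac is a free group of rank 2. In particular this group is large. -/
/-!
Let `A`, `B`, `C` be nontrivial groups and `a ∈ A`, `b ∈ B`, `c ∈ C` nontrivial. Freeness of
`⟨ab, ac⟩` is ping-pong on reduced words: `ab` and `ac` send every word not starting with a
letter of `B` (resp. `C`) to a word starting `a, b, …` (resp. `a, c, …`), and their inverses send
every word not of that shape to one starting with a letter of `B` (resp. `C`).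

For largeness, with `A`, `B`, `C` finite, let `Q = A × B × C` and map `A ∗ B ∗ C` to the regular
wreath product `F₂ ≀ Q`: `A` goes to `Q` by its coordinate embedding, while `B` and `C` go to `Q`
conjugated by the base elements `δ₀`, `δ₁` that are the generators `x₀`, `x₁` of `F₂` at `1 ∈ Q`
and trivial elsewhere. The preimage of the base group `F₂^Q` has finite index and maps to `F₂`
by evaluation at `1`; the commutators `⁅b, a⁆` and `⁅c, a⁆` lie in it and evaluate to `x₀` and
`x₁`.
-/

/-- A group `G` is large if some finite index subgroup surjects onto the free group `F₂`. -/
def IsLarge (G : Type*) [Group G] : Prop :=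
  ∃ H : Subgroup G, H.index ≠ 0 ∧ ∃ f : H →* FreeGroup (Fin 2), Function.Surjective f

open Monoid
open scoped commutatorElement

universe u

namespace Monoid.CoprodI

theorem Word.fstIdx_of_smul {ι : Type*} {H : ι → Type*} [∀ i, Group (H i)] [DecidableEq ι]
    [∀ i, DecidableEq (H i)] {i : ι} {x : H i} (hx : x ≠ 1) {w : Word H}
    (hw : w.fstIdx ≠ some i) : (of x • w).fstIdx = some i := by
  rw [← Word.cons_eq_smul (h1 := hw) (h2 := hx), Word.fstIdx_cons]

theorem injective_lift_of_mul_of {ι : Type u} {H : ι → Type u} [∀ i, Group (H i)]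
    {κ : Type u} [Nontrivial κ] {i₀ : ι} {σ : κ → ι} (hσ : Function.Injective σ)
    (hσi₀ : ∀ j, σ j ≠ i₀) {a : H i₀} (ha : a ≠ 1) {b : ∀ j, H (σ j)} (hb : ∀ j, b j ≠ 1) :
    Function.Injective (FreeGroup.lift fun j => of a * of (b j)) := by
  classical
  set Y : κ → Set (Word H) := fun j => {w | w.fstIdx = some (σ j)}
  -- `X j` consists of the reduced words starting with a letter of `H i₀` followed by one of
  -- `H (σ j)`.
  set X : κ → Set (Word H) := fun j => {w | ∃ x : H i₀, x ≠ 1 ∧ (of x)⁻¹ • w ∈ Y j}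
  have hYX {j : κ} {x : H i₀} (hx : x ≠ 1) {w : Word H} (hw : w ∈ Y j) :
      (of x • w).fstIdx = some i₀ :=
    Word.fstIdx_of_smul hx fun h => hσi₀ j (Option.some_injective _ (hw.symm.trans h))
  refine FreeGroup.injective_lift_of_ping_pong _ X Y (fun j => ?_) (fun j j' hjj' => ?_)
    (fun j j' hjj' => ?_) (fun j j' => ?_) (fun j => ?_) (fun j => ?_)
  · refine ⟨of a • of (b j) • Word.empty, a, ha, ?_⟩
    simpa [Y] using Word.fstIdx_of_smul (hb j) (w := Word.empty) (by simp [Word.fstIdx])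
  · refine Set.disjoint_left.2 fun w ⟨x, hx, hw⟩ ⟨x', hx', hw'⟩ => ?_
    by_cases hxx' : x = x'
    · subst hxx'
      exact hjj' (hσ (Option.some_injective _ (hw.symm.trans hw')))
    · have hshift : (of x')⁻¹ • w = of (x'⁻¹ * x) • (of x)⁻¹ • w := by
        rw [smul_smul, map_mul, map_inv, mul_assoc, mul_inv_cancel, mul_one]
      have h := hYX (inv_mul_eq_one.not.2 (Ne.symm hxx')) hw
      rw [← hshift] at h
      exact hσi₀ j' (Option.some_injective _ (hw'.symm.trans h))
  · exact Set.disjoint_left.2 fun w hw hw' =>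
      hjj' (hσ (Option.some_injective _ (hw.symm.trans hw')))
  · refine Set.disjoint_left.2 fun w ⟨x, hx, hw⟩ (hw' : w.fstIdx = _) => ?_
    have h := hYX hx hw
    rw [smul_inv_smul] at h
    exact hσi₀ j' (Option.some_injective _ (hw'.symm.trans h))
  · rintro _ ⟨w, hw, rfl⟩
    refine ⟨a, ha, ?_⟩
    simp only [mul_smul, inv_smul_smul]
    exact Word.fstIdx_of_smul (hb j) hw
  · rintro _ ⟨w, hw, rfl⟩
    have hw' : ((of a)⁻¹ • w).fstIdx ≠ some (σ j) := fun h => hw ⟨a, ha, h⟩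
    show ((of a * of (b j))⁻¹ • w).fstIdx = some (σ j)
    rw [mul_inv_rev, mul_smul, ← map_inv]
    exact Word.fstIdx_of_smul (inv_ne_one.2 (hb j)) hw'

end Monoid.CoprodI

namespace RegularWreathProduct

variable {D Q : Type*} [Group D] [Group Q]

def evalOne : (rightHom : D ≀ᵣ Q →* Q).ker →* D where
  toFun x := x.1.left 1
  map_one' := rfl
  map_mul' x y := by
    have hx : x.1.right = 1 := x.2
    simp [hx]

theorem commutator_conj_mulSingle [DecidableEq Q] (d : D) {p q : Q} (hp : p ≠ 1) (hq : q ≠ 1)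
    (hqp : q * p ≠ 1) (hpq : Commute p q) :
    let g := ⁅MulAut.conj (⟨Pi.mulSingle 1 d, 1⟩ : D ≀ᵣ Q) (inl q), inl p⁆
    g.right = 1 ∧ g.left 1 = d := by
  have h₁ : p⁻¹ * q⁻¹ ≠ 1 := by rwa [← mul_inv_rev, inv_ne_one]
  have h₂ : q * (p⁻¹ * q⁻¹) ≠ 1 := by
    rwa [← mul_assoc, ← hpq.inv_left.eq, mul_inv_cancel_right, inv_ne_one]
  constructor
  · simpa [commutatorElement_def, mul_assoc] using
      commutatorElement_eq_one_iff_commute.2 hpq.symm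
  · simp [commutatorElement_def, Pi.mulSingle_apply, hq, h₁, h₂]

end RegularWreathProduct

open RegularWreathProduct in
theorem isLarge_of_hom_regularWreathProduct {G Q : Type*} [Group G] [Group Q] [Finite Q]
    (θ : G →* FreeGroup (Fin 2) ≀ᵣ Q)
    (hθ : ∀ i, ∃ g, (θ g).right = 1 ∧ (θ g).left 1 = FreeGroup.of i) : IsLarge G := by
  refine ⟨rightHom.ker.comap θ, ?_, evalOne.comp (θ.subgroupComap _), ?_⟩
  · rw [MonoidHom.comap_ker, Subgroup.index_ker]
    exact Nat.card_pos.ne'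
  · rw [← MonoidHom.range_eq_top, eq_top_iff, ← FreeGroup.closure_range_of, Subgroup.closure_le]
    rintro _ ⟨i, rfl⟩
    obtain ⟨g, hg, hgi⟩ := hθ i
    exact ⟨⟨g, hg⟩, hgi⟩

namespace Monoid.Coprod

section Free

variable {A B C : Type} [Group A] [Group B] [Group C]

-- A constant family of factors, each containing a copy of `A`, `B` or `C`, avoids building a
-- dependent family of groups over `Fin 3`.
def toCoprodI : A ∗ (B ∗ C) →* CoprodI fun _ : Fin 3 => A × B × C :=
  lift ((CoprodI.of (i := 0)).comp (MonoidHom.inl _ _))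
    (lift ((CoprodI.of (i := 1)).comp ((MonoidHom.inr _ _).comp (MonoidHom.inl _ _)))
      ((CoprodI.of (i := 2)).comp ((MonoidHom.inr _ _).comp (MonoidHom.inr _ _))))

theorem injective_lift_inl_mul {a : A} {b : B} {c : C} (ha : a ≠ 1) (hb : b ≠ 1) (hc : c ≠ 1) :
    Function.Injective
      (FreeGroup.lift ![(inl a * inr (inl b) : A ∗ (B ∗ C)), inl a * inr (inr c)]) := by
  have hcomp :
      toCoprodI.comp (FreeGroup.lift ![(inl a * inr (inl b) : A ∗ (B ∗ C)), inl a * inr (inr c)]) =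
      FreeGroup.lift fun j => CoprodI.of (i := 0) ((a, 1, 1) : A × B × C) *
        CoprodI.of (i := j.succ) (![((1 : A), b, (1 : C)), (1, 1, c)] j) := by
    ext j
    fin_cases j <;> rfl
  refine Function.Injective.of_comp (f := toCoprodI) ?_
  rw [← MonoidHom.coe_comp, hcomp]
  refine CoprodI.injective_lift_of_mul_of (Fin.succ_injective 2) Fin.succ_ne_zero
    (by simpa using ha) fun j => ?_
  fin_cases j <;> simpa

noncomputable def closureInlMulEquivFreeGroup {a : A} {b : B} {c : C} (ha : a ≠ 1) (hb : b ≠ 1)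
    (hc : c ≠ 1) :
    Subgroup.closure ({inl a * inr (inl b), inl a * inr (inr c)} : Set (A ∗ (B ∗ C))) ≃*
      FreeGroup (Fin 2) :=
  (MulEquiv.subgroupCongr (by
      rw [FreeGroup.range_lift_eq_closure, Matrix.range_cons_cons_empty])).symm.trans
    (MonoidHom.ofInjective (injective_lift_inl_mul ha hb hc)).symm

end Free

section Large

variable {A B C : Type*} [Group A] [Group B] [Group C]

open scoped Classical in
noncomputable def toRegularWreathProduct : A ∗ (B ∗ C) →* FreeGroup (Fin 2) ≀ᵣ (A × B × C) :=
  let δ (i : Fin 2) : FreeGroup (Fin 2) ≀ᵣ (A × B × C) := ⟨Pi.mulSingle 1 (FreeGroup.of i), 1⟩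
  lift (RegularWreathProduct.inl.comp (MonoidHom.inl _ _))
    (lift ((MulAut.conj (δ 0)).toMonoidHom.comp
        (RegularWreathProduct.inl.comp ((MonoidHom.inr _ _).comp (MonoidHom.inl _ _))))
      ((MulAut.conj (δ 1)).toMonoidHom.comp
        (RegularWreathProduct.inl.comp ((MonoidHom.inr _ _).comp (MonoidHom.inr _ _)))))

theorem isLarge [Finite A] [Finite B] [Finite C] [Nontrivial A] [Nontrivial B] [Nontrivial C] :
    IsLarge (A ∗ (B ∗ C)) := by
  classical
  obtain ⟨a, ha⟩ := exists_ne (1 : A)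
  obtain ⟨b, hb⟩ := exists_ne (1 : B)
  obtain ⟨c, hc⟩ := exists_ne (1 : C)
  refine isLarge_of_hom_regularWreathProduct toRegularWreathProduct fun i => ?_
  fin_cases i
  · refine ⟨⁅(inr (inl b) : A ∗ (B ∗ C)), inl a⁆, ?_⟩
    simpa [map_commutatorElement, toRegularWreathProduct] using
      RegularWreathProduct.commutator_conj_mulSingle (FreeGroup.of (0 : Fin 2)) (p := (a, 1))
        (q := (1, b, 1)) (by simpa) (by simpa) (by simp [ha]) (by simp [Commute, SemiconjBy])
  · refine ⟨⁅(inr (inr c) : A ∗ (B ∗ C)), inl a⁆, ?_⟩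
    simpa [map_commutatorElement, toRegularWreathProduct] using
      RegularWreathProduct.commutator_conj_mulSingle (FreeGroup.of (1 : Fin 2)) (p := (a, 1))
        (q := (1, 1, c)) (by simpa) (by simpa) (by simp [ha]) (by simp [Commute, SemiconjBy])

end Large

end Monoid.Coprod

/-- In `(ℤ/mℤ) * (ℤ/nℤ) * (ℤ/kℤ)` with `m, n, k ≥ 2` and generators `a`, `b`, `c`,
the subgroup generated by `ab` and `ac` is free of rank `2`; in particular the group
is large. -/
theorem stmt_11 (m n k : ℕ) (hm : 2 ≤ m) (hn : 2 ≤ n) (hk : 2 ≤ k) :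
    let G := Monoid.Coprod (Multiplicative (ZMod m))
      (Monoid.Coprod (Multiplicative (ZMod n)) (Multiplicative (ZMod k)))
    let a : G := Monoid.Coprod.inl (Multiplicative.ofAdd 1)
    let b : G := Monoid.Coprod.inr (Monoid.Coprod.inl (Multiplicative.ofAdd 1))
    let c : G := Monoid.Coprod.inr (Monoid.Coprod.inr (Multiplicative.ofAdd 1))
    Nonempty ((Subgroup.closure {a * b, a * c}) ≃* FreeGroup (Fin 2)) ∧ IsLarge G := by
  have : Fact (1 < m) := ⟨hm⟩
  have : Fact (1 < n) := ⟨hn⟩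
  have : Fact (1 < k) := ⟨hk⟩
  exact ⟨⟨Coprod.closureInlMulEquivFreeGroup (by simp) (by simp) (by simp)⟩, Coprod.isLarge⟩
end

section
/- Let Γ be a finite simple graph and let v₁, v₂ be vertices forming a SIL, i.e. they are non-adjacent with distance at least 2, and there exists a connected component C of the induced subgraph on V(Γ) \ (Lk(v₁) ∩ Lk(v₂)) containing neither v₁ nor v₂. If z ∈ C, C₁ is the connected component of Γ \ St(v₁) containing z, and C₂ is the connected component of Γ \ St(v₂) containing z, then C₁ = C₂. -/
/-- `ConnWithin Γ A z w` means `w` lies in the connected component of `z` in the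
induced subgraph of `Γ` on the vertex set `A`: there is a walk from `z` to `w` all
of whose vertices lie in `A`. -/
def ConnWithin {V : Type*} (Γ : SimpleGraph V) (A : Set V) (z w : V) : Prop :=
  ∃ p : Γ.Walk z w, ∀ x ∈ p.support, x ∈ A

/-!
Let `A = (Lk(v₁) ∩ Lk(v₂))ᶜ`. Since `Γ \ St(v₁) ⊆ A`, any vertex `x` reached from `z` inside
`Γ \ St(v₁)` is reached inside `A`; if `x` were in `St(v₂)` we could step on to `v₂`, which lies
in `A` because `v₁` and `v₂` are not adjacent. This contradicts the choice of the component of `z`,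
so the component of `z` in `Γ \ St(v₁)` avoids `St(v₂)`, and by symmetry the two components agree.
-/

namespace ConnWithin

variable {V : Type*} {Γ : SimpleGraph V} {A B : Set V} {z w x y : V}

theorem mono (hAB : A ⊆ B) (h : ConnWithin Γ A z w) : ConnWithin Γ B z w :=
  let ⟨p, hp⟩ := h
  ⟨p, fun x hx => hAB (hp x hx)⟩

theorem concat (h : ConnWithin Γ A z x) (hxy : Γ.Adj x y) (hy : y ∈ A) :
    ConnWithin Γ A z y := by
  obtain ⟨p, hp⟩ := h
  refine ⟨p.concat hxy, fun u hu => ?_⟩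
  rw [SimpleGraph.Walk.support_concat, List.mem_append, List.mem_singleton] at hu
  rcases hu with hu | rfl
  exacts [hp u hu, hy]

theorem restrict (h : ConnWithin Γ A z w) (hB : ∀ x, ConnWithin Γ A z x → x ∈ B) :
    ConnWithin Γ B z w := by
  classical
  obtain ⟨p, hp⟩ := h
  exact ⟨p, fun x hx =>
    hB x ⟨p.takeUntil x hx, fun u hu => hp u (p.support_takeUntil_subset_support hx hu)⟩⟩

end ConnWithin

theorem notMem_star_of_connWithin_compl_star {V : Type*} {Γ : SimpleGraph V} {v₁ v₂ z x : V}
    (hadj : ¬ Γ.Adj v₁ v₂)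
    (hzv₂ : ¬ ConnWithin Γ ((Γ.neighborSet v₁ ∩ Γ.neighborSet v₂)ᶜ) z v₂)
    (h : ConnWithin Γ ((insert v₁ (Γ.neighborSet v₁))ᶜ) z x) :
    x ∉ insert v₂ (Γ.neighborSet v₂) := by
  have hA : ConnWithin Γ ((Γ.neighborSet v₁ ∩ Γ.neighborSet v₂)ᶜ) z x :=
    h.mono <| Set.compl_subset_compl.mpr <| Set.inter_subset_left.trans <| Set.subset_insert _ _
  rintro (rfl | hx)
  · exact hzv₂ hA
  · exact hzv₂ (hA.concat ((Γ.mem_neighborSet _ _).mp hx).symm fun h => hadj h.1)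

theorem stmt_15_general {V : Type*} (Γ : SimpleGraph V) (v₁ v₂ z : V)
    (hadj : ¬ Γ.Adj v₁ v₂)
    (hzv₁ : ¬ ConnWithin Γ ((Γ.neighborSet v₁ ∩ Γ.neighborSet v₂)ᶜ) z v₁)
    (hzv₂ : ¬ ConnWithin Γ ((Γ.neighborSet v₁ ∩ Γ.neighborSet v₂)ᶜ) z v₂) :
    {w | ConnWithin Γ ((insert v₁ (Γ.neighborSet v₁))ᶜ) z w} =
      {w | ConnWithin Γ ((insert v₂ (Γ.neighborSet v₂))ᶜ) z w} := by
  rw [Set.inter_comm] at hzv₁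
  ext w
  exact ⟨fun h => h.restrict fun _ hx => notMem_star_of_connWithin_compl_star hadj hzv₂ hx,
    fun h => h.restrict fun _ hx =>
      notMem_star_of_connWithin_compl_star (fun h => hadj h.symm) hzv₁ hx⟩

/-- If `{v₁, v₂ | z}` is a SIL in a finite simple graph `Γ` (i.e. `v₁`, `v₂` are
non-adjacent distinct vertices and `z` lies in a connected component of
`Γ \ (Lk(v₁) ∩ Lk(v₂))` containing neither `v₁` nor `v₂`), then the connected
component of `z` in `Γ \ St(v₁)` coincides with the connected component of `z` in
`Γ \ St(v₂)`. -/
theorem stmt_15 {V : Type*} [Fintype V] (Γ : SimpleGraph V) (v₁ v₂ z : V)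
    (hne : v₁ ≠ v₂) (hadj : ¬ Γ.Adj v₁ v₂)
    (hz : z ∉ Γ.neighborSet v₁ ∩ Γ.neighborSet v₂)
    (hzv₁ : ¬ ConnWithin Γ ((Γ.neighborSet v₁ ∩ Γ.neighborSet v₂)ᶜ) z v₁)
    (hzv₂ : ¬ ConnWithin Γ ((Γ.neighborSet v₁ ∩ Γ.neighborSet v₂)ᶜ) z v₂) :
    {w | ConnWithin Γ ((insert v₁ (Γ.neighborSet v₁))ᶜ) z w} =
      {w | ConnWithin Γ ((insert v₂ (Γ.neighborSet v₂))ᶜ) z w} :=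
  stmt_15_general Γ v₁ v₂ z hadj hzv₁ hzv₂
end
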